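/- arXiv:math/0401121 — 6 statements merged into one kernel-verified Lean document; each statement's English description precedes it below -/
import Mathlib

section
/- Let Γ and Δ be countable discrete groups. Then there exists a map μ : Δ_Γ → Prob(Γ) such that: (i) for every s ∈ Γ, ‖s·μ_y − μ_{s·y}‖₁ → 0 as y → ∞ along the cofinite filter on Δ_Γ, where s·y denotes the Bernoulli shift action of Γ on Δ_Γ; and (ii) for every x ∈ Δ_Γ, ‖μ_{xy} − μ_y‖₁ → 0 and ‖μ_{yx} − μ_y‖₁ → 0 as y → ∞ along the cofinite filter, where xy and yx denote products in the group Δ_Γ. -/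
open Function

/-- The group `Δ_Γ = ⊕_Γ Δ` of finitely supported functions `Γ → Δ`
under pointwise multiplication, as a subgroup of `Γ → Δ`. -/
def DeltaGamma (Γ Δ : Type*) [Group Δ] : Subgroup (Γ → Δ) where
  carrier := {y | (mulSupport y).Finite}
  one_mem' := by simp [mulSupport_one]
  mul_mem' := by
    intro a b ha hb
    exact ((Set.Finite.union ha hb).subset (mulSupport_mul a b))
  inv_mem' := by
    intro a ha
    simpa [mulSupport_inv] using ha

/-- The Bernoulli shift of `Γ` on `Δ_Γ`: `(s·y)(t) = y(s⁻¹t)`. -/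
def bshift {Γ Δ : Type*} [Group Γ] [Group Δ] (s : Γ) (y : DeltaGamma Γ Δ) :
    DeltaGamma Γ Δ :=
  ⟨fun t => (y : Γ → Δ) (s⁻¹ * t), by
    have hy : (mulSupport (y : Γ → Δ)).Finite := y.2
    refine Set.Finite.subset (hy.image (fun t => s * t)) ?_
    intro t ht
    exact ⟨s⁻¹ * t, ht, by group⟩⟩

/-!
Fix group seminorms `p` on `Γ` and `q` on `Δ` with finite sublevel sets (word lengths for an
enumeration of the group, available since the groups are countable). Give each point `t` of the
support of `y` the weight `1 + p t + q (y t)`, add one unit at `t = 1`, and let `μ_y` be the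
normalised weight. Multiplying `y` by a fixed `x` changes the weights by at most the weights of
`x`, a fixed total, and shifting by `s` changes each weight by at most `p s`, so in total by
`O(|supp y|)`. Both are negligible against the total mass as `y → ∞`: the mass has finite
sublevel sets, and since only finitely many `t` have `p t ≤ R`, it exceeds `R · |supp y|` up to a
bounded error, for every `R`.
-/

open Filter Set Topology Pointwise

lemma Set.Finite.pow {M : Type*} [Monoid M] {s : Set M} (hs : s.Finite) (n : ℕ) :
    (s ^ n).Finite := by
  induction n with
  | zero => simp
  | succ n ih => simpa [pow_succ] using ih.mul hs

section WordLength

variable {G : Type*} [Group G] (e : ℕ → G)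

def enumGenerators (n : ℕ) : Set G := insert 1 (e '' Iic n ∪ (e '' Iic n)⁻¹)

def enumBall (n : ℕ) : Set G := enumGenerators e n ^ n

noncomputable def enumLength (g : G) : ℕ := sInf {n | g ∈ enumBall e n}

lemma one_mem_enumGenerators (n : ℕ) : (1 : G) ∈ enumGenerators e n := mem_insert _ _

lemma enumGenerators_mono : Monotone (enumGenerators e) := fun _ _ hmn =>
  have h := image_mono (f := e) (Iic_subset_Iic.2 hmn)
  insert_subset_insert (union_subset_union h (inv_subset_inv.2 h))

lemma inv_enumGenerators (n : ℕ) : (enumGenerators e n)⁻¹ = enumGenerators e n := by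
  simp [enumGenerators, union_comm]

lemma finite_enumBall (n : ℕ) : (enumBall e n).Finite :=
  Set.Finite.pow ((((finite_Iic n).image e).union ((finite_Iic n).image e).inv).insert 1) n

lemma enumBall_mono : Monotone (enumBall e) := fun _ n hmn =>
  pow_subset_pow (enumGenerators_mono e hmn) (one_mem_enumGenerators e n) hmn

lemma mul_mem_enumBall {g h : G} {m n : ℕ} (hg : g ∈ enumBall e m) (hh : h ∈ enumBall e n) :
    g * h ∈ enumBall e (m + n) := by
  rw [enumBall, pow_add]
  exact mul_mem_mul (pow_subset_pow_left (enumGenerators_mono e (m.le_add_right n)) hg)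
    (pow_subset_pow_left (enumGenerators_mono e (n.le_add_left m)) hh)

lemma inv_mem_enumBall {g : G} {n : ℕ} (hg : g ∈ enumBall e n) : g⁻¹ ∈ enumBall e n := by
  rw [enumBall, ← inv_enumGenerators, inv_pow]
  exact inv_mem_inv.2 hg

variable {e}

lemma exists_mem_enumBall (he : Function.Surjective e) (g : G) : ∃ n, g ∈ enumBall e n := by
  obtain ⟨k, rfl⟩ := he g
  refine ⟨k + 1, subset_pow (one_mem_enumGenerators e _) k.succ_ne_zero ?_⟩
  exact mem_insert_of_mem _ (Or.inl (mem_image_of_mem e (Nat.le_succ k)))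

lemma mem_enumBall_enumLength (he : Function.Surjective e) (g : G) :
    g ∈ enumBall e (enumLength e g) :=
  Nat.sInf_mem (exists_mem_enumBall he g)

lemma enumLength_one : enumLength e (1 : G) = 0 :=
  Nat.sInf_eq_zero.2 (Or.inl (by simp [enumBall]))

lemma enumLength_mul_le (he : Function.Surjective e) (g h : G) :
    enumLength e (g * h) ≤ enumLength e g + enumLength e h :=
  Nat.sInf_le (mul_mem_enumBall e (mem_enumBall_enumLength he g) (mem_enumBall_enumLength he h))

lemma enumLength_inv_le (he : Function.Surjective e) (g : G) :
    enumLength e g⁻¹ ≤ enumLength e g :=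
  Nat.sInf_le (inv_mem_enumBall e (mem_enumBall_enumLength he g))

lemma setOf_enumLength_le_subset (he : Function.Surjective e) (n : ℕ) :
    {g : G | enumLength e g ≤ n} ⊆ enumBall e n := fun g hg =>
  enumBall_mono e hg (mem_enumBall_enumLength he g)

end WordLength

theorem exists_groupSeminorm_northcott (G : Type*) [Group G] [Countable G] :
    ∃ p : GroupSeminorm G, Northcott p := by
  obtain ⟨e, he⟩ := exists_surjective_nat G
  refine ⟨{ toFun := fun g => enumLength e g
            map_one' := by simp [enumLength_one]
            mul_le' := fun g h => by exact_mod_cast enumLength_mul_le he g h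
            inv' := fun g => by
              exact_mod_cast (enumLength_inv_le he g).antisymm
                (by simpa using enumLength_inv_le he g⁻¹) }, ⟨fun M => ?_⟩⟩
  refine (finite_enumBall e ⌈M⌉₊).subset fun g hg => setOf_enumLength_le_subset he _ ?_
  exact_mod_cast (show (enumLength e g : ℝ) ≤ M from hg).trans (Nat.le_ceil M)

lemma abs_sub_map_mul_left_le {G : Type*} [Group G] (f : GroupSeminorm G) (a b : G) :
    |f (a * b) - f b| ≤ f a := by
  simpa using abs_sub_map_le_div f (a * b) b

lemma abs_sub_map_mul_right_le {G : Type*} [Group G] (f : GroupSeminorm G) (a b : G) :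
    |f (b * a) - f b| ≤ f a := by
  have h := abs_sub_map_le_div f (b * a)⁻¹ b⁻¹
  rwa [map_inv_eq_map, map_inv_eq_map, div_inv_eq_mul, mul_inv_rev, inv_mul_cancel_right,
    map_inv_eq_map] at h

lemma finite_setOf_mulSupport_subset {α β : Type*} [One β] {A : Set α} {B : Set β}
    (hA : A.Finite) (hB : B.Finite) :
    {f : α → β | mulSupport f ⊆ A ∧ ∀ a, f a ∈ B}.Finite := by
  have : Finite A := hA.to_subtype
  have hmaps : MapsTo (fun (f : α → β) (a : A) => f a)
      {f | mulSupport f ⊆ A ∧ ∀ a, f a ∈ B} (univ.pi fun _ => B) := fun f hf a _ => hf.2 a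
  refine Set.Finite.of_injOn hmaps (fun f hf g hg hfg => funext fun a => ?_)
    (Set.Finite.pi fun _ => hB)
  by_cases ha : a ∈ A
  · exact congrFun hfg ⟨a, ha⟩
  · rw [notMem_mulSupport.1 fun h => ha (hf.1 h), notMem_mulSupport.1 fun h => ha (hg.1 h)]

lemma tsum_abs_div_tsum_sub_div_tsum_le {ι : Type*} {u v : ι → ℝ} (hu : Summable u)
    (hv : Summable v) (hv0 : ∀ i, 0 ≤ v i) (hU : 0 < ∑' i, u i) (hV : 0 < ∑' i, v i) :
    ∑' i, |v i / ∑' j, v j - u i / ∑' j, u j| ≤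
      2 * (∑' i, |v i - u i|) / ∑' i, u i := by
  set U := ∑' i, u i
  set V := ∑' i, v i
  set D := ∑' i, |v i - u i|
  have hD : Summable fun i => |v i - u i| := (hv.sub hu).abs
  have hUV : |U - V| ≤ D := by
    rw [← hu.tsum_sub hv, ← Real.norm_eq_abs]
    refine (norm_tsum_le_tsum_norm (by simpa [abs_sub_comm] using hD)).trans_eq ?_
    simp [Real.norm_eq_abs, abs_sub_comm, D]
  have hpt : ∀ i, |v i / V - u i / U| ≤ |v i - u i| / U + |U - V| / (U * V) * v i := by
    intro i
    have : v i / V - u i / U = (v i - u i) / U + (U - V) / (U * V) * v i := by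
      field_simp; ring
    rw [this]
    refine (abs_add_le _ _).trans_eq ?_
    rw [abs_div, abs_mul, abs_div, abs_of_pos hU, abs_of_pos (mul_pos hU hV), abs_of_nonneg (hv0 i)]
  have hbound : Summable fun i => |v i - u i| / U + |U - V| / (U * V) * v i :=
    (hD.div_const U).add (hv.mul_left _)
  calc ∑' i, |v i / V - u i / U|
      ≤ ∑' i, (|v i - u i| / U + |U - V| / (U * V) * v i) :=
        (hbound.of_nonneg_of_le (fun _ => abs_nonneg _) hpt).tsum_le_tsum hpt hbound
    _ = D / U + |U - V| / (U * V) * V := by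
        rw [(hD.div_const U).tsum_add (hv.mul_left _), tsum_div_const, tsum_mul_left]
    _ = D / U + |U - V| / U := by field_simp
    _ ≤ D / U + D / U := by gcongr
    _ = 2 * D / U := by ring

open scoped Classical in
lemma tsum_ite_eq_one_eq_ncard_mul {α β : Type*} [One β] (y : α → β) (c : ℝ) :
    ∑' t, (if y t = 1 then 0 else c) = (mulSupport y).ncard * c := by
  have : (fun t => if y t = 1 then 0 else c) = (mulSupport y).indicator fun _ => c := by
    ext t
    by_cases h : y t = 1 <;> simp [h]
  rw [this, ← tsum_subtype, tsum_const, Nat.card_coe_set_eq, nsmul_eq_mul]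

namespace DeltaGamma

lemma finite_mulSupport {Γ Δ : Type*} [Group Δ] (y : DeltaGamma Γ Δ) :
    (mulSupport (y : Γ → Δ)).Finite :=
  y.2

open scoped Classical

variable {Γ Δ : Type*} [Group Γ] [Group Δ] (p : GroupSeminorm Γ) (q : GroupSeminorm Δ)

-- The unit at `t = 1` keeps the mass positive, also for `y = 1`.
noncomputable def weight (y : Γ → Δ) (t : Γ) : ℝ :=
  (if y t = 1 then 0 else 1 + p t) + q (y t) + if t = 1 then 1 else 0

noncomputable def mass (y : Γ → Δ) : ℝ := ∑' t, weight p q y t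

noncomputable def prob (y : Γ → Δ) (t : Γ) : ℝ := weight p q y t / mass p q y

variable {p q} {y : Γ → Δ}

lemma weight_nonneg (y : Γ → Δ) (t : Γ) : 0 ≤ weight p q y t := by
  have := apply_nonneg p t
  have := apply_nonneg q (y t)
  unfold weight
  split_ifs <;> linarith

lemma map_le_weight (t : Γ) : q (y t) ≤ weight p q y t := by
  have := apply_nonneg p t
  unfold weight
  split_ifs <;> linarith

lemma map_le_weight_of_ne_one {t : Γ} (ht : y t ≠ 1) : p t ≤ weight p q y t := by
  have := apply_nonneg q (y t)
  simp only [weight, ht, if_false]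
  split_ifs <;> linarith

lemma summable_weight (hy : (mulSupport y).Finite) : Summable (weight p q y) := by
  refine summable_of_hasFiniteSupport ((hy.insert 1).subset fun t ht => ?_)
  by_contra h
  simp only [mem_insert_iff, mem_mulSupport, not_or, not_not] at h
  simp [weight, h.1, h.2] at ht

lemma weight_le_mass (hy : (mulSupport y).Finite) (t : Γ) : weight p q y t ≤ mass p q y :=
  (summable_weight hy).le_tsum t fun s _ => weight_nonneg y s

lemma one_le_mass (hy : (mulSupport y).Finite) : 1 ≤ mass p q y :=
  calc 1 ≤ weight p q y 1 := by
        have := apply_nonneg p 1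
        have := apply_nonneg q (y 1)
        simp only [weight, if_true]
        split_ifs <;> linarith
    _ ≤ mass p q y := weight_le_mass hy 1

lemma mass_pos (hy : (mulSupport y).Finite) : 0 < mass p q y :=
  one_pos.trans_le (one_le_mass hy)

lemma prob_nonneg (y : Γ → Δ) (t : Γ) : 0 ≤ prob p q y t :=
  div_nonneg (weight_nonneg y t) (tsum_nonneg (weight_nonneg y))

lemma summable_prob (hy : (mulSupport y).Finite) : Summable (prob p q y) :=
  (summable_weight hy).div_const _

lemma tsum_prob (hy : (mulSupport y).Finite) : ∑' t, prob p q y t = 1 := by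
  simp only [prob, tsum_div_const]
  exact div_self (mass_pos hy).ne'

lemma abs_weight_comp_mul_sub_le (y : Γ → Δ) (s t : Γ) :
    |weight p q (fun t => y (s⁻¹ * t)) t - weight p q y (s⁻¹ * t)| ≤
      (if y (s⁻¹ * t) = 1 then 0 else p s) +
        ((if t = 1 then 1 else 0) + if t = s then 1 else 0) := by
  have hp := abs_sub_map_mul_left_le p s (s⁻¹ * t)
  rw [mul_inv_cancel_left] at hp
  have hst : s⁻¹ * t = 1 ↔ t = s := by rw [inv_mul_eq_one, eq_comm]
  simp only [weight, hst]
  rw [abs_le] at hp ⊢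
  split_ifs <;> constructor <;> linarith [hp.1, hp.2]

lemma tsum_abs_weight_comp_mul_sub_le (hy : (mulSupport y).Finite) (s : Γ) :
    ∑' t, |weight p q (fun t => y (s⁻¹ * t)) t - weight p q y (s⁻¹ * t)| ≤
      (mulSupport y).ncard * p s + 2 := by
  have hsupp : Summable fun r => if y r = 1 then 0 else p s :=
    summable_of_hasFiniteSupport (hy.subset fun r hr => mem_mulSupport.2 fun h => hr (by simp [h]))
  have hsupp' : Summable fun t => if y (s⁻¹ * t) = 1 then 0 else p s :=
    (Equiv.mulLeft s⁻¹).summable_iff.2 hsupp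
  have hδ1 := (hasSum_ite_eq (1 : Γ) (1 : ℝ)).summable
  have hδs := (hasSum_ite_eq s (1 : ℝ)).summable
  have hbound := hsupp'.add (hδ1.add hδs)
  have hpt := abs_weight_comp_mul_sub_le (p := p) (q := q) y s
  have hreindex : ∑' t, (if y (s⁻¹ * t) = 1 then 0 else p s) =
      ∑' r, if y r = 1 then 0 else p s :=
    (Equiv.mulLeft s⁻¹).tsum_eq fun r => if y r = 1 then 0 else p s
  calc _ ≤ ∑' t, ((if y (s⁻¹ * t) = 1 then 0 else p s) +
          ((if t = 1 then 1 else 0) + if t = s then 1 else 0)) :=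
        (hbound.of_nonneg_of_le (fun _ => abs_nonneg _) hpt).tsum_le_tsum hpt hbound
    _ = _ := by
        rw [hsupp'.tsum_add (hδ1.add hδs), hδ1.tsum_add hδs, tsum_ite_eq, tsum_ite_eq, hreindex,
          tsum_ite_eq_one_eq_ncard_mul]
        ring

lemma tsum_abs_prob_comp_mul_sub_le (hy : (mulSupport y).Finite) (s : Γ) :
    ∑' t, |prob p q y (s⁻¹ * t) - prob p q (fun t => y (s⁻¹ * t)) t| ≤
      2 * ((mulSupport y).ncard * p s + 2) / mass p q y := by
  have hy' : (mulSupport fun t => y (s⁻¹ * t)).Finite :=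
    hy.preimage (mul_right_injective s⁻¹).injOn
  have hu : Summable fun t => weight p q y (s⁻¹ * t) :=
    (Equiv.mulLeft s⁻¹).summable_iff.2 (summable_weight hy)
  have hU : ∑' t, weight p q y (s⁻¹ * t) = mass p q y :=
    (Equiv.mulLeft s⁻¹).tsum_eq (weight p q y)
  have key := tsum_abs_div_tsum_sub_div_tsum_le hu (summable_weight (p := p) (q := q) hy')
    (weight_nonneg _) (hU ▸ mass_pos hy) (mass_pos hy')
  rw [hU] at key
  calc _ = ∑' t,
          |prob p q (fun t => y (s⁻¹ * t)) t - weight p q y (s⁻¹ * t) / mass p q y| :=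
        tsum_congr fun t => abs_sub_comm _ _
    _ ≤ _ := key
    _ ≤ _ := by
        gcongr
        · exact (mass_pos hy).le
        · exact tsum_abs_weight_comp_mul_sub_le hy s

lemma abs_weight_sub_le {x z : Γ → Δ} (hz : ∀ t, x t = 1 → z t = y t)
    (hq : ∀ t, |q (z t) - q (y t)| ≤ q (x t)) (t : Γ) :
    |weight p q z t - weight p q y t| ≤ weight p q x t := by
  by_cases hx : x t = 1
  · rw [show weight p q z t = weight p q y t by simp only [weight, hz t hx], sub_self, abs_zero]
    exact weight_nonneg x t
  · have := apply_nonneg p t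
    have := abs_le.1 (hq t)
    simp only [weight, hx, if_false]
    rw [abs_le]
    split_ifs <;> constructor <;> linarith

lemma tsum_abs_prob_sub_le {x z : Γ → Δ} (hx : (mulSupport x).Finite)
    (hy : (mulSupport y).Finite) (hz : ∀ t, x t = 1 → z t = y t)
    (hq : ∀ t, |q (z t) - q (y t)| ≤ q (x t)) :
    ∑' t, |prob p q z t - prob p q y t| ≤ 2 * mass p q x / mass p q y := by
  have hz' : (mulSupport z).Finite := (hx.union hy).subset fun t ht => by
    by_contra h
    simp only [mem_union, mem_mulSupport, not_or, not_not] at h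
    exact ht (by rw [hz t h.1, h.2])
  have hdiff : Summable fun t => |weight p q z t - weight p q y t| :=
    ((summable_weight hz').sub (summable_weight hy)).abs
  calc _ ≤ 2 * (∑' t, |weight p q z t - weight p q y t|) / mass p q y :=
        tsum_abs_div_tsum_sub_div_tsum_le (summable_weight hy) (summable_weight hz')
          (weight_nonneg z) (mass_pos hy) (mass_pos hz')
    _ ≤ _ := by
        gcongr
        · exact (mass_pos hy).le
        · exact hdiff.tsum_le_tsum (abs_weight_sub_le hz hq) (summable_weight hx)

variable [Northcott p] [Northcott q]

lemma northcott_mass : Northcott fun y : DeltaGamma Γ Δ => mass p q y := by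
  refine ⟨fun M => ?_⟩
  refine ((finite_setOf_mulSupport_subset (Northcott.finite_le (h := ⇑p) M)
    (Northcott.finite_le (h := ⇑q) M)).preimage Subtype.val_injective.injOn).subset
    fun y hy => ⟨fun t ht => ?_, fun t => ?_⟩
  · exact (map_le_weight_of_ne_one ht).trans ((weight_le_mass (finite_mulSupport y) t).trans hy)
  · exact (map_le_weight t).trans ((weight_le_mass (finite_mulSupport y) t).trans hy)

lemma tendsto_mass_atTop :
    Tendsto (fun y : DeltaGamma Γ Δ => mass p q y) cofinite atTop :=
  (northcott_iff_tendsto _).1 northcott_mass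

omit [Northcott q] in
lemma ncard_mulSupport_le (hy : (mulSupport y).Finite) {R : ℝ} (hR : 0 < R) :
    ((mulSupport y).ncard : ℝ) ≤ {t | p t ≤ R}.ncard + mass p q y / R := by
  set F := hy.toFinset
  have hsmall : (F.filter (p · ≤ R)).card ≤ {t | p t ≤ R}.ncard := by
    rw [← ncard_coe_finset]
    exact ncard_le_ncard (fun t ht => by simp only [Finset.coe_filter] at ht; exact ht.2)
      (Northcott.finite_le R)
  have hlarge : R * (F.filter (¬ p · ≤ R)).card ≤ mass p q y :=
    calc R * (F.filter (¬ p · ≤ R)).card = ∑ t ∈ F.filter (¬ p · ≤ R), R := by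
          rw [Finset.sum_const, nsmul_eq_mul, mul_comm]
      _ ≤ ∑ t ∈ F.filter (¬ p · ≤ R), weight p q y t := Finset.sum_le_sum fun t ht => by
          rw [Finset.mem_filter, hy.mem_toFinset] at ht
          exact (not_le.1 ht.2).le.trans (map_le_weight_of_ne_one ht.1)
      _ ≤ mass p q y := (summable_weight hy).sum_le_tsum _ fun t _ => weight_nonneg y t
  rw [ncard_eq_toFinset_card _ hy, ← Finset.card_filter_add_card_filter_not (p · ≤ R)]
  push_cast
  have := (le_div_iff₀' hR).2 hlarge
  exact add_le_add (by exact_mod_cast hsmall) this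

lemma tendsto_ncard_div_mass :
    Tendsto (fun y : DeltaGamma Γ Δ => ((mulSupport (y : Γ → Δ)).ncard : ℝ) / mass p q y)
      cofinite (𝓝 0) := by
  refine tendsto_order.2 ⟨fun a ha => Eventually.of_forall fun y => ha.trans_le
    (div_nonneg (Nat.cast_nonneg _) (mass_pos (finite_mulSupport y)).le), fun ε hε => ?_⟩
  have hR : 0 < 2 / ε := by positivity
  set m : ℝ := ({t | p t ≤ 2 / ε}.ncard : ℝ)
  have hsmall : ∀ᶠ y : DeltaGamma Γ Δ in cofinite, m / mass p q y < ε / 2 :=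
    (tendsto_const_nhds.div_atTop tendsto_mass_atTop).eventually (gt_mem_nhds (half_pos hε))
  filter_upwards [hsmall] with y hy
  have hm := mass_pos (p := p) (q := q) (finite_mulSupport y)
  calc _ ≤ (m + mass p q y / (2 / ε)) / mass p q y := by
        gcongr
        exact ncard_mulSupport_le (finite_mulSupport y) hR
    _ = m / mass p q y + ε / 2 := by field_simp
    _ < ε := by linarith

theorem tendsto_tsum_abs_prob_bshift_sub (s : Γ) :
    Tendsto (fun y : DeltaGamma Γ Δ =>
      ∑' t, |prob p q y (s⁻¹ * t) - prob p q (bshift s y) t|) cofinite (𝓝 0) := by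
  have hbound : Tendsto (fun y : DeltaGamma Γ Δ =>
      2 * p s * ((mulSupport (y : Γ → Δ)).ncard / mass p q y) + 4 / mass p q y)
      cofinite (𝓝 0) := by
    simpa using (tendsto_ncard_div_mass.const_mul (2 * p s)).add
      (tendsto_const_nhds.div_atTop tendsto_mass_atTop)
  refine squeeze_zero (fun _ => tsum_nonneg fun _ => abs_nonneg _) (fun y => ?_) hbound
  calc _ ≤ 2 * ((mulSupport (y : Γ → Δ)).ncard * p s + 2) / mass p q y :=
        tsum_abs_prob_comp_mul_sub_le (finite_mulSupport y) s
    _ = _ := by ring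

theorem tendsto_tsum_abs_prob_sub (x : DeltaGamma Γ Δ) (f : DeltaGamma Γ Δ → DeltaGamma Γ Δ)
    (hf : ∀ y t, (x : Γ → Δ) t = 1 → (f y : Γ → Δ) t = (y : Γ → Δ) t)
    (hq : ∀ y t, |q ((f y : Γ → Δ) t) - q ((y : Γ → Δ) t)| ≤ q ((x : Γ → Δ) t)) :
    Tendsto (fun y => ∑' t, |prob p q (f y) t - prob p q y t|) cofinite (𝓝 0) :=
  squeeze_zero (fun _ => tsum_nonneg fun _ => abs_nonneg _)
    (fun y => tsum_abs_prob_sub_le (finite_mulSupport x) (finite_mulSupport y) (hf y) (hq y))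
    (tendsto_const_nhds.div_atTop tendsto_mass_atTop)

end DeltaGamma

open Filter in
/-- For countable discrete groups `Γ` and `Δ` there is a map
`μ : Δ_Γ → Prob(Γ)` such that (i) for every `s ∈ Γ`,
`‖s·μ_y − μ_{s·y}‖₁ → 0` as `y → ∞` along the cofinite filter on `Δ_Γ`
(where `(s·μ)(t) = μ(s⁻¹t)` and `s·y` is the Bernoulli shift), and (ii) for every
`x ∈ Δ_Γ`, `‖μ_{xy} − μ_y‖₁ → 0` and `‖μ_{yx} − μ_y‖₁ → 0` as `y → ∞` along the
cofinite filter. -/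
theorem stmt0 (Γ Δ : Type*) [Group Γ] [Group Δ] [Countable Γ] [Countable Δ] :
    ∃ μ : DeltaGamma Γ Δ → Γ → ℝ,
      (∀ y, (∀ t, 0 ≤ μ y t) ∧ Summable (μ y) ∧ (∑' t, μ y t) = 1) ∧
      (∀ s : Γ,
        Tendsto (fun y : DeltaGamma Γ Δ => ∑' t, |μ y (s⁻¹ * t) - μ (bshift s y) t|)
          cofinite (nhds 0)) ∧
      (∀ x : DeltaGamma Γ Δ,
        Tendsto (fun y : DeltaGamma Γ Δ => ∑' t, |μ (x * y) t - μ y t|)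
          cofinite (nhds 0)) ∧
      (∀ x : DeltaGamma Γ Δ,
        Tendsto (fun y : DeltaGamma Γ Δ => ∑' t, |μ (y * x) t - μ y t|)
          cofinite (nhds 0)) := by
  obtain ⟨p, _⟩ := exists_groupSeminorm_northcott Γ
  obtain ⟨q, _⟩ := exists_groupSeminorm_northcott Δ
  refine ⟨fun y => DeltaGamma.prob p q y, fun y => ⟨DeltaGamma.prob_nonneg _,
    DeltaGamma.summable_prob (DeltaGamma.finite_mulSupport y),
    DeltaGamma.tsum_prob (DeltaGamma.finite_mulSupport y)⟩,
    DeltaGamma.tendsto_tsum_abs_prob_bshift_sub, fun x => ?_, fun x => ?_⟩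
  · exact DeltaGamma.tendsto_tsum_abs_prob_sub x (x * ·) (fun y t hx => by simp [hx])
      fun _ _ => abs_sub_map_mul_left_le q _ _
  · exact DeltaGamma.tendsto_tsum_abs_prob_sub x (· * x) (fun y t hx => by simp [hx])
      fun _ _ => abs_sub_map_mul_right_le q _ _
end

section
/- For every s ∈ Γ and every y ∈ Δ_Γ with y ≠ e, one has ‖λ(s)ξ_y − ξ_{s·y}‖₂² ≤ 2 · l_Γ(s) · n(y)/w(y), where s·y is the Bernoulli shift of y by s. -/
open Function

/-- A proper length function on a group. -/
structure IsProperLength {G : Type*} [Group G] (l : G → ℝ) : Prop where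
  nonneg : ∀ s, 0 ≤ l s
  eq_zero_iff : ∀ s, l s = 0 ↔ s = 1
  mul_le : ∀ s t, l (s * t) ≤ l s + l t
  inv_eq : ∀ s, l s⁻¹ = l s
  proper : ∀ R : ℝ, {s : G | l s ≤ R}.Finite

open Classical in
/-- `w(y,t) = l_Γ(t) + l_Δ(y t)` if `t ∈ supp y`, and `0` otherwise. -/
noncomputable def wt {Γ Δ : Type*} [Group Δ] (lG : Γ → ℝ) (lD : Δ → ℝ)
    (y : Γ → Δ) (t : Γ) : ℝ :=
  if y t ≠ 1 then lG t + lD (y t) else 0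

/-- `w(y) = Σ_t w(y,t)`. -/
noncomputable def w {Γ Δ : Type*} [Group Δ] (lG : Γ → ℝ) (lD : Δ → ℝ)
    (y : Γ → Δ) : ℝ :=
  ∑ᶠ t, wt lG lD y t

/-- The coefficients of the unit vector `ξ_y ∈ ℓ²(Γ)`: `ξ_y(t) = (w(y,t)/w(y))^{1/2}`. -/
noncomputable def xi {Γ Δ : Type*} [Group Δ] (lG : Γ → ℝ) (lD : Δ → ℝ)
    (y : Γ → Δ) (t : Γ) : ℝ :=
  Real.sqrt (wt lG lD y t / w lG lD y)

/-!
After reindexing by `t = s u`, both `λ(s)ξ_y` and `ξ_{s·y}` are square roots of probability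
weights on `supp y`, namely `a_u / Σ a` and `b_u / Σ b` with `a_u = l_Γ(u) + l_Δ(y u)` and
`b_u = l_Γ(s u) + l_Δ(y u)`. Since `(√x - √z)² ≤ |x - z|`, the squared `ℓ²` distance is at most
the `ℓ¹` distance of the normalised weights, which is at most `2 Σ |a_u - b_u| / Σ a`; finally
`|a_u - b_u| ≤ l_Γ(s)` by the triangle inequality.
-/

open Finset

lemma Real.sq_sqrt_sub_sqrt_le_abs_sub {x z : ℝ} (hx : 0 ≤ x) (hz : 0 ≤ z) :
    (√x - √z) ^ 2 ≤ |x - z| := by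
  have hx' := Real.sqrt_nonneg x
  have hz' := Real.sqrt_nonneg z
  calc (√x - √z) ^ 2 = |√x - √z| * |√x - √z| := by rw [sq, abs_mul_abs_self]
    _ ≤ |√x - √z| * (√x + √z) := by
        gcongr
        exact abs_sub_le_iff.2 ⟨by linarith, by linarith⟩
    _ = |x - z| := by
        rw [← abs_of_nonneg (add_nonneg hx' hz'), ← abs_mul]
        congr 1
        linear_combination Real.sq_sqrt hx - Real.sq_sqrt hz

namespace Finset

variable {ι : Type*} (F : Finset ι) {a b : ι → ℝ}

lemma sum_abs_div_sum_sub_div_sum_le (hb : ∀ u ∈ F, 0 ≤ b u) (hA : 0 < ∑ u ∈ F, a u) :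
    ∑ u ∈ F, |a u / ∑ v ∈ F, a v - b u / ∑ v ∈ F, b v|
      ≤ 2 * (∑ u ∈ F, |a u - b u|) / ∑ u ∈ F, a u := by
  set A := ∑ v ∈ F, a v
  set B := ∑ v ∈ F, b v
  have hterm : ∀ u ∈ F, |a u / A - b u / B| ≤ |a u - b u| / A + b u * |1 / A - 1 / B| := by
    intro u hu
    calc |a u / A - b u / B| ≤ |a u / A - b u / A| + |b u / A - b u / B| := abs_sub_le _ _ _
      _ = _ := by
        rw [← sub_div, abs_div, abs_of_pos hA, div_eq_mul_one_div (b u) A,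
          div_eq_mul_one_div (b u) B, ← mul_sub, abs_mul, abs_of_nonneg (hb u hu)]
  have hnorm : B * |1 / A - 1 / B| ≤ |B - A| / A := by
    rcases (show 0 ≤ B from sum_nonneg hb).eq_or_lt with hB | hB
    · rw [← hB, zero_mul]
      positivity
    · refine le_of_eq ?_
      calc B * |1 / A - 1 / B| = |B * (1 / A - 1 / B)| := by rw [abs_mul, abs_of_pos hB]
        _ = |B - A| / A := by
          rw [show B * (1 / A - 1 / B) = (B - A) / A by field_simp [hB.ne'], abs_div, abs_of_pos hA]
  have hBA : |B - A| ≤ ∑ u ∈ F, |a u - b u| := by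
    rw [← sum_sub_distrib]
    exact (abs_sum_le_sum_abs _ _).trans_eq (sum_congr rfl fun u _ => abs_sub_comm _ _)
  calc ∑ u ∈ F, |a u / A - b u / B|
      ≤ ∑ u ∈ F, (|a u - b u| / A + b u * |1 / A - 1 / B|) := sum_le_sum hterm
    _ = (∑ u ∈ F, |a u - b u|) / A + B * |1 / A - 1 / B| := by
        rw [sum_add_distrib, sum_div, sum_mul]
    _ ≤ (∑ u ∈ F, |a u - b u|) / A + (∑ u ∈ F, |a u - b u|) / A := by
        gcongr
        exact hnorm.trans (div_le_div_of_nonneg_right hBA hA.le)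
    _ = 2 * (∑ u ∈ F, |a u - b u|) / A := by ring

lemma sum_sq_sqrt_div_sum_sub_le (ha : ∀ u ∈ F, 0 ≤ a u) (hb : ∀ u ∈ F, 0 ≤ b u)
    (hA : 0 < ∑ u ∈ F, a u) :
    ∑ u ∈ F, (√(a u / ∑ v ∈ F, a v) - √(b u / ∑ v ∈ F, b v)) ^ 2
      ≤ 2 * (∑ u ∈ F, |a u - b u|) / ∑ u ∈ F, a u :=
  (sum_le_sum fun u hu => Real.sq_sqrt_sub_sqrt_le_abs_sub
    (div_nonneg (ha u hu) (sum_nonneg ha)) (div_nonneg (hb u hu) (sum_nonneg hb))).trans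
    (F.sum_abs_div_sum_sub_div_sum_le hb hA)

end Finset

section BernoulliShift

variable {Γ Δ : Type*} [Group Δ] {lG : Γ → ℝ} {lD : Δ → ℝ} {y : Γ → Δ}

lemma wt_of_eq_one {t : Γ} (h : y t = 1) : wt lG lD y t = 0 := by
  simp [wt, h]

lemma wt_of_ne_one {t : Γ} (h : y t ≠ 1) : wt lG lD y t = lG t + lD (y t) := by
  simp [wt, h]

lemma wt_nonneg (hG : 0 ≤ lG) (hD : 0 ≤ lD) (y : Γ → Δ) (t : Γ) : 0 ≤ wt lG lD y t := by
  by_cases h : y t = 1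
  · rw [wt_of_eq_one h]
  · rw [wt_of_ne_one h]
    exact add_nonneg (hG t) (hD _)

lemma w_eq_sum (hy : (mulSupport y).Finite) : w lG lD y = ∑ t ∈ hy.toFinset, wt lG lD y t :=
  finsum_eq_finsetSum_of_support_subset _ fun t ht => by
    simpa using mt wt_of_eq_one ht

lemma w_pos (hG : 0 ≤ lG) (hD : IsProperLength lD) (hy : (mulSupport y).Finite) (hy1 : y ≠ 1) :
    0 < w lG lD y := by
  obtain ⟨u, hu⟩ : ∃ u, y u ≠ 1 := Function.ne_iff.1 hy1
  have hlD : 0 < lD (y u) := (hD.nonneg _).lt_of_ne fun h => hu ((hD.eq_zero_iff _).1 h.symm)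
  rw [w_eq_sum hy]
  refine sum_pos' (fun t _ => wt_nonneg hG hD.nonneg y t) ⟨u, by simpa using hu, ?_⟩
  rw [wt_of_ne_one hu]
  exact add_pos_of_nonneg_of_pos (hG u) hlD

variable [Group Γ]

lemma wt_shift_of_eq_one {s u : Γ} (h : y u = 1) :
    wt lG lD (fun t => y (s⁻¹ * t)) (s * u) = 0 :=
  wt_of_eq_one (by simpa using h)

lemma w_shift_eq_sum (hy : (mulSupport y).Finite) (s : Γ) :
    w lG lD (fun t => y (s⁻¹ * t))
      = ∑ u ∈ hy.toFinset, wt lG lD (fun t => y (s⁻¹ * t)) (s * u) := by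
  rw [w, ← finsum_comp_equiv (Equiv.mulLeft s)]
  exact finsum_eq_finsetSum_of_support_subset _ fun u hu => by
    simpa using mt wt_shift_of_eq_one hu

lemma abs_wt_sub_wt_shift_le (hG : IsProperLength lG) (y : Γ → Δ) (s u : Γ) :
    |wt lG lD y u - wt lG lD (fun t => y (s⁻¹ * t)) (s * u)| ≤ lG s := by
  by_cases hu : y u = 1
  · rw [wt_of_eq_one hu, wt_shift_of_eq_one hu, sub_zero, abs_zero]
    exact hG.nonneg s
  · rw [wt_of_ne_one hu, wt_of_ne_one (by simpa using hu), inv_mul_cancel_left]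
    have hsu := hG.mul_le s u
    have hu' := hG.mul_le s⁻¹ (s * u)
    rw [inv_mul_cancel_left, hG.inv_eq] at hu'
    exact abs_sub_le_iff.2 ⟨by linarith, by linarith⟩

lemma tsum_sq_xi_sub_xi_shift (hy : (mulSupport y).Finite) (s : Γ) :
    ∑' t, (xi lG lD y (s⁻¹ * t) - xi lG lD (fun t' => y (s⁻¹ * t')) t) ^ 2
      = ∑ u ∈ hy.toFinset, (√(wt lG lD y u / w lG lD y)
          - √(wt lG lD (fun t => y (s⁻¹ * t)) (s * u) / w lG lD (fun t => y (s⁻¹ * t)))) ^ 2 := by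
  rw [← (Equiv.mulLeft s).tsum_eq, tsum_eq_sum (s := hy.toFinset)]
  · simp [xi]
  · intro u hu
    rw [Set.Finite.mem_toFinset, mem_mulSupport, not_not] at hu
    simp [xi, wt_of_eq_one hu, wt_shift_of_eq_one hu]

end BernoulliShift

theorem stmt1_general {Γ Δ : Type*} [Group Γ] [Group Δ]
    (lG : Γ → ℝ) (lD : Δ → ℝ) (hG : IsProperLength lG) (hD : IsProperLength lD)
    (s : Γ) (y : Γ → Δ) (hy : (mulSupport y).Finite) (hy1 : y ≠ 1) :
    (∑' t : Γ, (xi lG lD y (s⁻¹ * t) - xi lG lD (fun t' => y (s⁻¹ * t')) t) ^ 2)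
      ≤ 2 * lG s * (Nat.card (mulSupport y)) / w lG lD y := by
  set F := hy.toFinset
  have hcard : (Nat.card (mulSupport y) : ℝ) = #F := by
    rw [Nat.card_coe_set_eq, Set.ncard_eq_toFinset_card _ hy]
  have hA := w_eq_sum hy ▸ w_pos hG.nonneg hD hy hy1
  have hdiff : ∑ u ∈ F, |wt lG lD y u - wt lG lD (fun t => y (s⁻¹ * t)) (s * u)| ≤ #F * lG s := by
    simpa using F.sum_le_card_nsmul _ _ fun u _ => abs_wt_sub_wt_shift_le hG y s u
  rw [tsum_sq_xi_sub_xi_shift hy, w_shift_eq_sum hy, w_eq_sum hy, hcard]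
  calc _ ≤ 2 * (∑ u ∈ F, |wt lG lD y u - wt lG lD (fun t => y (s⁻¹ * t)) (s * u)|)
          / ∑ u ∈ F, wt lG lD y u :=
        F.sum_sq_sqrt_div_sum_sub_le (fun u _ => wt_nonneg hG.nonneg hD.nonneg _ _)
          (fun u _ => wt_nonneg hG.nonneg hD.nonneg _ _) hA
    _ ≤ 2 * (#F * lG s) / ∑ u ∈ F, wt lG lD y u := by gcongr
    _ = _ := by ring

/-- For every `s ∈ Γ` and `y ∈ Δ_Γ` with `y ≠ e`,
`‖λ(s)ξ_y − ξ_{s·y}‖₂² ≤ 2 l_Γ(s) n(y)/w(y)`, where `(s·y)(t) = y(s⁻¹t)` is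
the Bernoulli shift and `(λ(s)ξ)(t) = ξ(s⁻¹t)`. -/
theorem stmt1 {Γ Δ : Type*} [Group Γ] [Group Δ] [Countable Γ] [Countable Δ]
    (lG : Γ → ℝ) (lD : Δ → ℝ) (hG : IsProperLength lG) (hD : IsProperLength lD)
    (s : Γ) (y : Γ → Δ) (hy : (mulSupport y).Finite) (hy1 : y ≠ 1) :
    (∑' t : Γ, (xi lG lD y (s⁻¹ * t) - xi lG lD (fun t' => y (s⁻¹ * t')) t) ^ 2)
      ≤ 2 * lG s * (Nat.card (mulSupport y)) / w lG lD y :=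
  stmt1_general lG lD hG hD s y hy hy1
end

section
/- For all x, y ∈ Δ_Γ with y ≠ e and yx ≠ e, one has ‖ξ_{yx} − ξ_y‖₂² ≤ 2 · w(x)/w(y), where yx denotes the product in the group Δ_Γ (pointwise multiplication). -/
open Function

private lemma sqrt_sub_sq_le_abs {u v : ℝ} (hu : 0 ≤ u) (hv : 0 ≤ v) :
    (Real.sqrt u - Real.sqrt v) ^ 2 ≤ |u - v| := by
  rcases le_total v u with h | h
  · rw [abs_of_nonneg (by linarith)]
    nlinarith [Real.sq_sqrt hu, Real.sq_sqrt hv, Real.sqrt_le_sqrt h,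
      Real.sqrt_nonneg v, Real.sqrt_nonneg u]
  · rw [abs_of_nonpos (by linarith)]
    nlinarith [Real.sq_sqrt hu, Real.sq_sqrt hv, Real.sqrt_le_sqrt h,
      Real.sqrt_nonneg v, Real.sqrt_nonneg u]

/-- For `x, y ∈ Δ_Γ` with `y ≠ e` and `yx ≠ e`,
`‖ξ_{yx} − ξ_y‖₂² ≤ 2 w(x)/w(y)`, where `yx` is the pointwise product in `Δ_Γ`. -/
theorem stmt3 {Γ Δ : Type*} [Group Γ] [Group Δ] [Countable Γ] [Countable Δ]
    (lG : Γ → ℝ) (lD : Δ → ℝ) (hG : IsProperLength lG) (hD : IsProperLength lD)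
    (x y : Γ → Δ) (hx : (mulSupport x).Finite) (hy : (mulSupport y).Finite)
    (hy1 : y ≠ 1) (hyx1 : y * x ≠ 1) :
    (∑' t : Γ, (xi lG lD (y * x) t - xi lG lD y t) ^ 2)
      ≤ 2 * w lG lD x / w lG lD y := by
  classical
  set S : Finset Γ := (hy.union hx).toFinset with hS
  have hmemS : ∀ t : Γ, t ∉ S → x t = 1 ∧ y t = 1 := by
    intro t ht
    rw [hS, Set.Finite.mem_toFinset, Set.mem_union] at ht
    push_neg at ht
    exact ⟨by simpa [mulSupport] using ht.2, by simpa [mulSupport] using ht.1⟩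
  set a : Γ → ℝ := wt lG lD (y * x) with ha
  set b : Γ → ℝ := wt lG lD y with hb
  set c : Γ → ℝ := wt lG lD x with hc
  have hnn : ∀ (z : Γ → Δ) (t : Γ), 0 ≤ wt lG lD z t := by
    intro z t
    rw [wt]
    split
    · exact add_nonneg (hG.nonneg t) (hD.nonneg _)
    · exact le_refl 0
  have ha0 : ∀ t, 0 ≤ a t := fun t => hnn _ t
  have hb0 : ∀ t, 0 ≤ b t := fun t => hnn _ t
  have hc0 : ∀ t, 0 ≤ c t := fun t => hnn _ t
  -- identify the finsum `w` with finite sums over S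
  have hsupp : ∀ z : Γ → Δ, mulSupport z ⊆ S → support (wt lG lD z) ⊆ S := by
    intro z hz t ht
    apply hz
    intro h0
    apply ht
    rw [wt, if_neg (by simpa using h0)]
  have hsubx : mulSupport x ⊆ (S : Set Γ) := by
    intro t ht; rw [hS]; simp [Set.Finite.mem_toFinset]; right; exact ht
  have hsuby : mulSupport y ⊆ (S : Set Γ) := by
    intro t ht; rw [hS]; simp [Set.Finite.mem_toFinset]; left; exact ht
  have hsubyx : mulSupport (y * x) ⊆ (S : Set Γ) := by
    intro t ht
    by_contra h
    obtain ⟨h1, h2⟩ := hmemS t h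
    apply ht
    simp [h1, h2]
  have hA : w lG lD (y * x) = ∑ t ∈ S, a t :=
    finsum_eq_sum_of_support_subset _ (hsupp _ hsubyx)
  have hB : w lG lD y = ∑ t ∈ S, b t :=
    finsum_eq_sum_of_support_subset _ (hsupp _ hsuby)
  have hC : w lG lD x = ∑ t ∈ S, c t :=
    finsum_eq_sum_of_support_subset _ (hsupp _ hsubx)
  set A : ℝ := ∑ t ∈ S, a t with hA'
  set B : ℝ := ∑ t ∈ S, b t with hB'
  set C : ℝ := ∑ t ∈ S, c t with hC'
  -- positivity of A and B
  have hpos : ∀ z : Γ → Δ, z ≠ 1 → mulSupport z ⊆ (S : Set Γ) →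
      0 < ∑ t ∈ S, wt lG lD z t := by
    intro z hz hzS
    obtain ⟨t, ht⟩ : ∃ t, z t ≠ 1 := by
      by_contra h
      push_neg at h
      exact hz (funext fun t => h t)
    refine Finset.sum_pos' (fun i _ => hnn z i) ⟨t, hzS ht, ?_⟩
    rw [wt, if_pos (by simpa using ht)]
    have h1 : 0 < lD (z t) :=
      lt_of_le_of_ne (hD.nonneg _) (fun h => ht ((hD.eq_zero_iff _).mp h.symm))
    linarith [hG.nonneg t]
  have hApos : 0 < A := hpos _ hyx1 hsubyx
  have hBpos : 0 < B := hpos _ hy1 hsuby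
  -- pointwise bound |a t - b t| ≤ c t
  have hdiff : ∀ t, |a t - b t| ≤ c t := by
    intro t
    rw [ha, hb, hc, wt, wt, wt]
    simp only [Pi.mul_apply, ne_eq, ite_not]
    by_cases hxt : x t = 1
    · simp [hxt]
    · rw [if_neg hxt]
      by_cases hyt : y t = 1
      · rw [if_pos hyt, hyt, one_mul, if_neg hxt, sub_zero,
          abs_of_nonneg (add_nonneg (hG.nonneg t) (hD.nonneg _))]
      · rw [if_neg hyt]
        by_cases hyxt : y t * x t = 1
        · rw [if_pos hyxt, zero_sub, abs_neg,
            abs_of_nonneg (add_nonneg (hG.nonneg t) (hD.nonneg _))]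
          have hxy : y t = (x t)⁻¹ := eq_inv_of_mul_eq_one_left hyxt
          rw [hxy, hD.inv_eq]
        · rw [if_neg hyxt]
          have h1 : lD (y t * x t) ≤ lD (y t) + lD (x t) := hD.mul_le _ _
          have h2 : lD (y t) ≤ lD (y t * x t) + lD (x t) := by
            have := hD.mul_le (y t * x t) (x t)⁻¹
            rw [mul_inv_cancel_right, hD.inv_eq] at this
            exact this
          rw [abs_le]
          constructor <;> [linarith [hG.nonneg t]; linarith [hG.nonneg t]]
  have hsumdiff : ∑ t ∈ S, |a t - b t| ≤ C := Finset.sum_le_sum fun t _ => hdiff t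
  have hABdiff : |B - A| ≤ C := by
    calc |B - A| = |∑ t ∈ S, (b t - a t)| := by rw [Finset.sum_sub_distrib]
      _ ≤ ∑ t ∈ S, |b t - a t| := Finset.abs_sum_le_sum_abs _ _
      _ = ∑ t ∈ S, |a t - b t| := by simp [abs_sub_comm]
      _ ≤ C := hsumdiff
  -- rewrite the tsum as a finite sum
  have htsum : (∑' t : Γ, (xi lG lD (y * x) t - xi lG lD y t) ^ 2)
      = ∑ t ∈ S, (Real.sqrt (a t / A) - Real.sqrt (b t / B)) ^ 2 := by
    rw [tsum_eq_sum (s := S) ?_]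
    · refine Finset.sum_congr rfl fun t _ => by rw [xi, xi, hA, hB]
    · intro t ht
      obtain ⟨h1, h2⟩ := hmemS t ht
      have hat : a t = 0 := by rw [ha, wt]; simp [h1, h2]
      have hbt : b t = 0 := by rw [hb, wt]; simp [h2]
      rw [xi, xi, hA, hB, ← ha, ← hb, hat, hbt]
      simp
  rw [htsum, hC, hB]
  -- main estimate
  have key : ∀ t ∈ S, (Real.sqrt (a t / A) - Real.sqrt (b t / B)) ^ 2
      ≤ a t * |1 / A - 1 / B| + |a t - b t| / B := by
    intro t _
    calc (Real.sqrt (a t / A) - Real.sqrt (b t / B)) ^ 2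
        ≤ |a t / A - b t / B| :=
          sqrt_sub_sq_le_abs (div_nonneg (ha0 t) hApos.le) (div_nonneg (hb0 t) hBpos.le)
      _ ≤ |a t / A - a t / B| + |a t / B - b t / B| := abs_sub_le _ _ _
      _ = a t * |1 / A - 1 / B| + |a t - b t| / B := by
          rw [div_sub_div_same, abs_div, abs_of_pos hBpos]
          congr 1
          rw [div_eq_mul_one_div (a t) A, div_eq_mul_one_div (a t) B, ← mul_sub,
            abs_mul, abs_of_nonneg (ha0 t)]
  calc ∑ t ∈ S, (Real.sqrt (a t / A) - Real.sqrt (b t / B)) ^ 2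
      ≤ ∑ t ∈ S, (a t * |1 / A - 1 / B| + |a t - b t| / B) := Finset.sum_le_sum key
    _ = A * |1 / A - 1 / B| + (∑ t ∈ S, |a t - b t|) / B := by
        rw [Finset.sum_add_distrib, ← Finset.sum_mul, ← Finset.sum_div]
    _ ≤ C / B + C / B := by
        have h1 : A * |1 / A - 1 / B| = |B - A| / B := by
          have : |1 / A - 1 / B| = |B - A| / (A * B) := by
            rw [div_sub_div _ _ (ne_of_gt hApos) (ne_of_gt hBpos), abs_div,
              abs_of_pos (mul_pos hApos hBpos)]
            ring_nf
          rw [this]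
          field_simp
        rw [h1]
        gcongr
    _ = 2 * C / B := by ring
end

section
/- Let Γ be a countable group acting on a countable set K, let λ denote the left-regular unitary representation of Γ on ℓ²(Γ) and σ_K the permutation unitary representation of Γ on ℓ²(K) given by σ_K(s)δ_x = δ_{s·x}. Let V : ℓ²(K) → ℓ²(Γ) be a linear isometry such that for every s ∈ Γ the operator V*λ(s)V − σ_K(s) on ℓ²(K) is compact. For x ∈ K define μ_x ∈ ℓ¹(Γ) by μ_x(t) = |(Vδ_x)(t)|². Then each μ_x belongs to Prob(Γ), and for every s ∈ Γ, ‖s·μ_x − μ_{s·x}‖₁ → 0 as x → ∞ along the cofinite filter on K. -/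
/-!
`μ_x` is a probability vector because `V` is an isometry. For the almost invariance, put
`T = V*λ(s)V − σ_K(s)`; then `⟪λ(s)Vδ_x, Vδ_{s·x}⟫ = 1 + conj ((Tδ_x)(s·x))`. Since `T` is
compact, `{Tδ_x}` is totally bounded in `ℓ²(K)`, so its coordinates vanish at infinity uniformly;
as `λ(s)Vδ_x` and `Vδ_{s·x}` are unit vectors, this gives `‖λ(s)Vδ_x − Vδ_{s·x}‖ → 0`.
Finally `s·μ_x = |λ(s)Vδ_x|²`, and Cauchy–Schwarz gives
`∑ |‖f t‖² − ‖g t‖²| ≤ (‖f‖ + ‖g‖)‖f − g‖`.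
-/

open Filter Topology
open scoped ENNReal ComplexConjugate

theorem abs_norm_sq_sub_norm_sq_le {F : Type*} [SeminormedAddCommGroup F] (x y : F) :
    |‖x‖ ^ 2 - ‖y‖ ^ 2| ≤ (‖x‖ + ‖y‖) * ‖x - y‖ := by
  rw [sq_sub_sq, abs_mul, abs_of_nonneg (by positivity)]
  exact mul_le_mul_of_nonneg_left (abs_norm_sub_norm_le x y) (by positivity)

theorem tendsto_norm_sub_of_tendsto_inner_one {𝕜 E ι : Type*} [RCLike 𝕜] [NormedAddCommGroup E]
    [InnerProductSpace 𝕜 E] {l : Filter ι} {a b : ι → E} (ha : ∀ i, ‖a i‖ = 1)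
    (hb : ∀ i, ‖b i‖ = 1) (h : Tendsto (fun i => inner 𝕜 (a i) (b i)) l (𝓝 1)) :
    Tendsto (fun i => ‖a i - b i‖) l (𝓝 0) := by
  have hsq : ∀ i, ‖a i - b i‖ = √(1 ^ 2 - 2 * RCLike.re (inner 𝕜 (a i) (b i)) + 1 ^ 2) := by
    intro i
    rw [← Real.sqrt_sq (norm_nonneg (a i - b i)), norm_sub_sq (𝕜 := 𝕜), ha, hb]
  have hre : Tendsto (fun i => RCLike.re (inner 𝕜 (a i) (b i))) l (𝓝 1) := by
    simpa [Function.comp_def] using (RCLike.continuous_re.tendsto (1 : 𝕜)).comp h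
  have hlim : Tendsto (fun i => √(1 ^ 2 - 2 * RCLike.re (inner 𝕜 (a i) (b i)) + 1 ^ 2)) l
      (𝓝 √(1 ^ 2 - 2 * 1 + 1 ^ 2)) :=
    ((tendsto_const_nhds.sub (hre.const_mul 2)).add tendsto_const_nhds).sqrt
  simp_rw [hsq]
  convert hlim using 2
  norm_num

namespace lp

variable {α : Type*} {E : α → Type*} [∀ i, NormedAddCommGroup (E i)]

theorem hasSum_norm_sq (f : lp E 2) : HasSum (fun i => ‖f i‖ ^ 2) (‖f‖ ^ 2) := by
  simpa using lp.hasSum_norm (p := 2) (by norm_num) f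

theorem norm_eq_of_apply_eq_comp_equiv {F : Type*} [NormedAddCommGroup F]
    {f g : lp (fun _ : α => F) 2} (e : α ≃ α) (h : ∀ i, g i = f (e i)) : ‖g‖ = ‖f‖ := by
  have hg : HasSum (fun i => ‖f (e i)‖ ^ 2) (‖g‖ ^ 2) := by
    simpa only [h] using hasSum_norm_sq g
  have hsq : ‖g‖ ^ 2 = ‖f‖ ^ 2 :=
    hg.unique ((e.hasSum_iff (f := fun i => ‖f i‖ ^ 2)).2 (hasSum_norm_sq f))
  exact (sq_eq_sq₀ (norm_nonneg _) (norm_nonneg _)).1 hsq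

theorem tsum_abs_norm_sq_sub_norm_sq_le (f g : lp E 2) :
    (Summable fun i => |‖f i‖ ^ 2 - ‖g i‖ ^ 2|) ∧
      ∑' i, |‖f i‖ ^ 2 - ‖g i‖ ^ 2| ≤ (‖f‖ + ‖g‖) * ‖f - g‖ := by
  have hpq : (2 : ℝ≥0∞).toReal.HolderConjugate (2 : ℝ≥0∞).toReal := by
    simpa using Real.HolderConjugate.two_two
  obtain ⟨hf, hf'⟩ := lp.tsum_mul_le_mul_norm hpq f (f - g)
  obtain ⟨hg, hg'⟩ := lp.tsum_mul_le_mul_norm hpq g (f - g)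
  have hle : ∀ i, |‖f i‖ ^ 2 - ‖g i‖ ^ 2| ≤ ‖f i‖ * ‖(f - g) i‖ + ‖g i‖ * ‖(f - g) i‖ := by
    intro i
    rw [← add_mul, lp.coeFn_sub, Pi.sub_apply]
    exact abs_norm_sq_sub_norm_sq_le _ _
  have hs := Summable.of_nonneg_of_le (fun i => abs_nonneg _) hle (hf.add hg)
  refine ⟨hs, ?_⟩
  calc ∑' i, |‖f i‖ ^ 2 - ‖g i‖ ^ 2|
      ≤ ∑' i, (‖f i‖ * ‖(f - g) i‖ + ‖g i‖ * ‖(f - g) i‖) := hs.tsum_le_tsum hle (hf.add hg)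
    _ = ∑' i, ‖f i‖ * ‖(f - g) i‖ + ∑' i, ‖g i‖ * ‖(f - g) i‖ := hf.tsum_add hg
    _ ≤ (‖f‖ + ‖g‖) * ‖f - g‖ := by rw [add_mul]; exact add_le_add hf' hg'

variable {p : ℝ≥0∞}

theorem tendsto_norm_apply_cofinite (hp : 0 < p.toReal) (f : lp E p) :
    Tendsto (fun i => ‖f i‖) cofinite (𝓝 0) := by
  have h := ((lp.hasSum_norm hp f).summable.tendsto_cofinite_zero).rpow_const
    (p := 1 / p.toReal) (Or.inr (by positivity))
  simpa [← Real.rpow_mul (norm_nonneg _), hp.ne'] using h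

variable [Fact (1 ≤ p)]

theorem eventually_cofinite_forall_norm_apply_lt (hp : 0 < p.toReal) {S : Set (lp E p)}
    (hS : TotallyBounded S) {ε : ℝ} (hε : 0 < ε) : ∀ᶠ i in cofinite, ∀ f ∈ S, ‖f i‖ < ε := by
  obtain ⟨t, -, ht, hSt⟩ := Metric.finite_approx_of_totallyBounded hS (ε / 2) (half_pos hε)
  have hsmall : ∀ᶠ i in cofinite, ∀ c ∈ t, ‖c i‖ < ε / 2 :=
    (eventually_all_finite ht).2 fun c _ =>
      (tendsto_norm_apply_cofinite hp c).eventually (gt_mem_nhds (half_pos hε))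
  filter_upwards [hsmall] with i hi f hf
  obtain ⟨c, hc, hfc⟩ := Set.mem_iUnion₂.1 (hSt hf)
  calc ‖f i‖ ≤ ‖c i‖ + ‖(f - c) i‖ := by
        rw [lp.coeFn_sub, Pi.sub_apply]; exact norm_le_norm_add_norm_sub' _ _
    _ ≤ ‖c i‖ + ‖f - c‖ := by
        gcongr; exact lp.norm_apply_le_norm (ENNReal.toReal_pos_iff.1 hp).1.ne' _ _
    _ < ε / 2 + ε / 2 := add_lt_add (hi c hc) (by rwa [← dist_eq_norm])
    _ = ε := add_halves ε

end lp

theorem IsCompactOperator.tendsto_norm_apply_comp {𝕜 F α ι : Type*} {E : α → Type*}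
    [NontriviallyNormedField 𝕜] [SeminormedAddCommGroup F] [NormedSpace 𝕜 F]
    [∀ i, NormedAddCommGroup (E i)] [∀ i, NormedSpace 𝕜 (E i)] {p : ℝ≥0∞} [Fact (1 ≤ p)]
    (hp : 0 < p.toReal) {T : F →L[𝕜] lp E p} (hT : IsCompactOperator T) {u : ι → F}
    (hu : Bornology.IsBounded (Set.range u)) {φ : ι → α} (hφ : Tendsto φ cofinite cofinite) :
    Tendsto (fun j => ‖T (u j) (φ j)‖) cofinite (𝓝 0) := by
  obtain ⟨C, hC, hTC⟩ := hT.image_subset_compact_of_bounded (f := (T : F →ₗ[𝕜] lp E p)) hu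
  refine Metric.tendsto_nhds.2 fun ε hε => ?_
  filter_upwards
    [hφ.eventually (lp.eventually_cofinite_forall_norm_apply_lt hp hC.totallyBounded hε)] with j hj
  simpa using hj _ (hTC ⟨u j, Set.mem_range_self j, rfl⟩)

theorem tendsto_norm_sub_single_of_isCompactOperator {𝕜 K H : Type*} [RCLike 𝕜] [DecidableEq K]
    [NormedAddCommGroup H] [InnerProductSpace 𝕜 H] [CompleteSpace H]
    (V : lp (fun _ : K => 𝕜) 2 →ₗᵢ[𝕜] H) (U : H →L[𝕜] H) (hU : ∀ h, ‖U h‖ = ‖h‖)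
    (σ : lp (fun _ : K => 𝕜) 2 →L[𝕜] lp (fun _ : K => 𝕜) 2) {φ : K → K}
    (hφ : Function.Injective φ) (hσ : ∀ x, σ (lp.single 2 x 1) = lp.single 2 (φ x) 1)
    (hT : IsCompactOperator
      ((ContinuousLinearMap.adjoint V.toContinuousLinearMap).comp
        (U.comp V.toContinuousLinearMap) - σ)) :
    Tendsto (fun x => ‖U (V (lp.single 2 x 1)) - V (lp.single 2 (φ x) 1)‖) cofinite (𝓝 0) := by
  set T := (ContinuousLinearMap.adjoint V.toContinuousLinearMap).comp
    (U.comp V.toContinuousLinearMap) - σ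
  have he : ∀ x, ‖(lp.single 2 x 1 : lp (fun _ : K => 𝕜) 2)‖ = 1 := fun x => by
    simp [lp.norm_single]
  have hinner : ∀ x, inner 𝕜 (U (V (lp.single 2 x 1))) (V (lp.single 2 (φ x) 1))
      = conj (T (lp.single 2 x 1) (φ x)) + 1 := by
    intro x
    have hTx : ContinuousLinearMap.adjoint V.toContinuousLinearMap (U (V (lp.single 2 x 1)))
        = T (lp.single 2 x 1) + lp.single 2 (φ x) 1 := by
      simp [T, hσ]
    have hadj := ContinuousLinearMap.adjoint_inner_left V.toContinuousLinearMap
      (lp.single 2 (φ x) 1) (U (V (lp.single 2 x 1)))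
    rw [LinearIsometry.coe_toContinuousLinearMap] at hadj
    rw [← hadj, hTx, inner_add_left, lp.inner_single_right, inner_self_eq_norm_sq_to_K, he]
    simp
  have hbdd :
      Bornology.IsBounded (Set.range fun x : K => (lp.single 2 x 1 : lp (fun _ : K => 𝕜) 2)) :=
    isBounded_iff_forall_norm_le.2 ⟨1, by rintro _ ⟨x, rfl⟩; exact (he x).le⟩
  have hT0 := hT.tendsto_norm_apply_comp (by norm_num) hbdd hφ.tendsto_cofinite
  refine tendsto_norm_sub_of_tendsto_inner_one (𝕜 := 𝕜) (fun x => by rw [hU, V.norm_map, he])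
    (fun x => by rw [V.norm_map, he]) ?_
  simp_rw [hinner]
  have hconj : Tendsto (fun x => conj (T (lp.single 2 x 1) (φ x))) cofinite (𝓝 0) :=
    tendsto_zero_iff_norm_tendsto_zero.2 (by simpa using hT0)
  simpa using hconj.add_const 1

theorem stmt9_general {Γ K : Type*} [Group Γ] [DecidableEq K] [MulAction Γ K]
    (V : lp (fun _ : K => ℂ) 2 →ₗᵢ[ℂ] lp (fun _ : Γ => ℂ) 2)
    (lam : Γ → (lp (fun _ : Γ => ℂ) 2 →L[ℂ] lp (fun _ : Γ => ℂ) 2))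
    (hlam : ∀ (s : Γ) (ξ : lp (fun _ : Γ => ℂ) 2) (t : Γ), (lam s ξ) t = ξ (s⁻¹ * t))
    (σK : Γ → (lp (fun _ : K => ℂ) 2 →L[ℂ] lp (fun _ : K => ℂ) 2))
    (hσK : ∀ (s : Γ) (x : K), σK s (lp.single 2 x 1) = lp.single 2 (s • x) 1)
    (hcpt : ∀ s : Γ, IsCompactOperator
      ((ContinuousLinearMap.adjoint V.toContinuousLinearMap).comp
        ((lam s).comp V.toContinuousLinearMap) - σK s))
    (μ : K → Γ → ℝ)
    (hμ : ∀ x t, μ x t = ‖(V (lp.single 2 x 1)) t‖ ^ 2) :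
    (∀ x, (∀ t, 0 ≤ μ x t) ∧ Summable (μ x) ∧ (∑' t, μ x t) = 1) ∧
    (∀ s : Γ,
      Tendsto (fun x : K => ∑' t, |μ x (s⁻¹ * t) - μ (s • x) t|) cofinite (nhds 0)) := by
  have hVe : ∀ x, ‖V (lp.single 2 x 1)‖ = 1 := fun x => by simp [lp.norm_single]
  have hμsum : ∀ x, HasSum (μ x) 1 := fun x => by
    simpa [← hμ, hVe] using lp.hasSum_norm_sq (V (lp.single 2 x 1))
  refine ⟨fun x => ⟨fun t => by rw [hμ]; positivity, (hμsum x).summable, (hμsum x).tsum_eq⟩,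
    fun s => ?_⟩
  have hlam_norm : ∀ ξ, ‖lam s ξ‖ = ‖ξ‖ := fun ξ =>
    lp.norm_eq_of_apply_eq_comp_equiv (Equiv.mulLeft s⁻¹) (hlam s ξ)
  have hconv := tendsto_norm_sub_single_of_isCompactOperator V (lam s) hlam_norm (σK s)
    (MulAction.injective s) (hσK s) (hcpt s)
  refine squeeze_zero (fun x => tsum_nonneg fun t => abs_nonneg _) (fun x => ?_)
    (by simpa using hconv.const_mul 2)
  have hbound := (lp.tsum_abs_norm_sq_sub_norm_sq_le (lam s (V (lp.single 2 x 1)))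
    (V (lp.single 2 (s • x) 1))).2
  rw [hlam_norm, hVe, hVe, one_add_one_eq_two] at hbound
  simpa [hμ, hlam] using hbound

/-- Let `Γ` act on a countable set `K`, let `λ` be the left-regular
representation on `ℓ²(Γ)` and `σ_K` the permutation representation on `ℓ²(K)`
(`σ_K(s)δ_x = δ_{s·x}`). If `V : ℓ²(K) → ℓ²(Γ)` is a linear isometry such that
`V*λ(s)V − σ_K(s)` is compact for every `s`, then `μ_x := |Vδ_x|²` belongs to
`Prob(Γ)` for every `x ∈ K`, and for every `s ∈ Γ`,
`‖s·μ_x − μ_{s·x}‖₁ → 0` as `x → ∞` along the cofinite filter on `K`. -/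
theorem stmt9 {Γ K : Type*} [Group Γ] [Countable Γ] [Countable K] [DecidableEq Γ] [DecidableEq K] [MulAction Γ K]
    (V : lp (fun _ : K => ℂ) 2 →ₗᵢ[ℂ] lp (fun _ : Γ => ℂ) 2)
    (lam : Γ → (lp (fun _ : Γ => ℂ) 2 →L[ℂ] lp (fun _ : Γ => ℂ) 2))
    (hlam : ∀ (s : Γ) (ξ : lp (fun _ : Γ => ℂ) 2) (t : Γ), (lam s ξ) t = ξ (s⁻¹ * t))
    (σK : Γ → (lp (fun _ : K => ℂ) 2 →L[ℂ] lp (fun _ : K => ℂ) 2))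
    (hσK : ∀ (s : Γ) (x : K), σK s (lp.single 2 x 1) = lp.single 2 (s • x) 1)
    (hcpt : ∀ s : Γ, IsCompactOperator
      ((ContinuousLinearMap.adjoint V.toContinuousLinearMap).comp
        ((lam s).comp V.toContinuousLinearMap) - σK s))
    (μ : K → Γ → ℝ)
    (hμ : ∀ x t, μ x t = ‖(V (lp.single 2 x 1)) t‖ ^ 2) :
    (∀ x, (∀ t, 0 ≤ μ x t) ∧ Summable (μ x) ∧ (∑' t, μ x t) = 1) ∧
    (∀ s : Γ,
      Tendsto (fun x : K => ∑' t, |μ x (s⁻¹ * t) - μ (s • x) t|) cofinite (nhds 0)) :=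
  stmt9_general V lam hlam σK hσK hcpt μ hμ
end

section
/- Let Γ be a countable group acting on a countably infinite set K (with the discrete topology), and let μ : K → Prob(Γ) satisfy: for every s ∈ Γ, ‖s·μ_x − μ_{s·x}‖₁ → 0 as x → ∞ along the cofinite filter on K. Regard each μ_x as a state on ℓ∞(Γ), φ_x(f) = Σ_t μ_x(t) f(t), so that x ↦ φ_x maps K into the weak-* compact state space S of ℓ∞(Γ); Γ acts on S by (s·φ)(f) = φ(s⁻¹·f), where (s·f)(t) = f(s⁻¹t) for f ∈ ℓ∞(Γ). Let βK be the Stone–Čech compactification of K; each s ∈ Γ extends to a homeomorphism of βK (the continuous extension of x ↦ s·x), and x ↦ φ_x extends to a continuous map φ̃ : βK → S. Then for every point p of the Stone–Čech remainder ∂^β K = βK \ K (i.e., p not in the image of the canonical embedding K → βK) and every s ∈ Γ, one has φ̃(s·p) = s·φ̃(p). -/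
/-!
Put `G q = φ̃(q)(s⁻¹·f) - φ̃(s·q)(f)`, a continuous real function on `βK`. On `K` it equals the
pairing of `f` with `s·μ_x - μ_{s·x}`, so `|G x| ≤ ‖s·μ_x - μ_{s·x}‖₁ ‖f‖_∞ → 0` along the cofinite
filter. A point of the remainder is a cluster point of `K` along the cofinite filter (finite sets
are closed and `K` is dense), so continuity forces `G p = 0`.
-/

open Filter Topology
open scoped ENNReal

theorem DenseRange.mapClusterPt_cofinite_of_notMem_range {K Y : Type*} [TopologicalSpace Y]
    [T1Space Y] {i : K → Y} (hi : DenseRange i) {p : Y} (hp : p ∉ Set.range i) :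
    MapClusterPt p cofinite i := by
  rw [mapClusterPt_def, clusterPt_iff_forall_mem_closure]
  intro V hV
  have hF : (i '' (i ⁻¹' V)ᶜ).Finite := (mem_cofinite.1 (mem_map.1 hV)).image i
  have hcover : Set.range i = i '' (i ⁻¹' V) ∪ i '' (i ⁻¹' V)ᶜ := by
    rw [← Set.image_union, Set.union_compl_self, Set.image_univ]
  have hpcl : p ∈ closure (i '' (i ⁻¹' V)) ∪ i '' (i ⁻¹' V)ᶜ := by
    rw [← hF.isClosed.closure_eq, ← closure_union, ← hcover, hi.closure_range]
    trivial
  refine closure_mono (Set.image_preimage_subset i V) (hpcl.resolve_right fun h => hp ?_)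
  exact Set.image_subset_range _ _ h

theorem DenseRange.eq_of_tendsto_cofinite {K Y Z : Type*} [TopologicalSpace Y] [T1Space Y]
    [TopologicalSpace Z] [T2Space Z] {i : K → Y} (hi : DenseRange i) {G : Y → Z}
    (hG : Continuous G) {a : Z} (hGa : Tendsto (G ∘ i) cofinite (𝓝 a)) {p : Y}
    (hp : p ∉ Set.range i) : G p = a :=
  eq_of_nhds_neBot <| ((hi.mapClusterPt_cofinite_of_notMem_range hp).continuousAt_comp
    hG.continuousAt).clusterPt.mono hGa

theorem norm_mul_lp_top_le {ι : Type*} (d : ι → ℝ) (f : lp (fun _ : ι => ℝ) ∞) (t : ι) :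
    ‖d t * f t‖ ≤ |d t| * ‖f‖ := by
  rw [norm_mul, Real.norm_eq_abs]
  exact mul_le_mul_of_nonneg_left (lp.norm_apply_le_norm ENNReal.top_ne_zero f t) (abs_nonneg _)

theorem summable_mul_lp_top {ι : Type*} {d : ι → ℝ} (hd : Summable d)
    (f : lp (fun _ : ι => ℝ) ∞) : Summable fun t => d t * f t :=
  (hd.abs.mul_right ‖f‖).of_norm_bounded (norm_mul_lp_top_le d f)

theorem abs_tsum_mul_lp_top_le {ι : Type*} {d : ι → ℝ} (hd : Summable d)
    (f : lp (fun _ : ι => ℝ) ∞) : |∑' t, d t * f t| ≤ (∑' t, |d t|) * ‖f‖ :=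
  calc |∑' t, d t * f t| ≤ ∑' t, ‖d t * f t‖ := norm_tsum_le_tsum_norm (summable_mul_lp_top hd f).norm
    _ ≤ ∑' t, |d t| * ‖f‖ :=
      (summable_mul_lp_top hd f).norm.tsum_le_tsum (norm_mul_lp_top_le d f) (hd.abs.mul_right _)
    _ = (∑' t, |d t|) * ‖f‖ := tsum_mul_right

theorem abs_tsum_mul_sub_tsum_mul_le {ι : Type*} {μ ν : ι → ℝ} (hμ : Summable μ) (hν : Summable ν)
    (f : lp (fun _ : ι => ℝ) ∞) :
    |∑' t, μ t * f t - ∑' t, ν t * f t| ≤ (∑' t, |μ t - ν t|) * ‖f‖ := by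
  rw [← (summable_mul_lp_top hμ f).tsum_sub (summable_mul_lp_top hν f)]
  simpa only [sub_mul] using abs_tsum_mul_lp_top_le (hμ.sub hν) f

theorem tsum_mul_eq_tsum_translate_mul {Γ : Type*} [Group Γ] (μ f g : Γ → ℝ) (s : Γ)
    (hg : ∀ t, g t = f (s * t)) : ∑' t, μ t * g t = ∑' t, μ (s⁻¹ * t) * f t := by
  conv_rhs => rw [← (Equiv.mulLeft s).tsum_eq]
  simp [hg]

theorem stmt11_general {Γ K : Type*} [Group Γ]
    [TopologicalSpace K]
    [MulAction Γ K]
    (μ : K → Γ → ℝ)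
    (hprob : ∀ x, (∀ t, 0 ≤ μ x t) ∧ Summable (μ x) ∧ (∑' t, μ x t) = 1)
    (happrox : ∀ s : Γ,
      Tendsto (fun x : K => ∑' t, |μ x (s⁻¹ * t) - μ (s • x) t|) cofinite (nhds 0))
    (φ : K → WeakDual ℝ (lp (fun _ : Γ => ℝ) ∞))
    (hφ : ∀ (x : K) (f : lp (fun _ : Γ => ℝ) ∞), φ x f = ∑' t, μ x t * f t)
    (φt : StoneCech K → WeakDual ℝ (lp (fun _ : Γ => ℝ) ∞))
    (hφt : Continuous φt) (hφext : ∀ x : K, φt (stoneCechUnit x) = φ x)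
    (s : Γ) (hs : StoneCech K → StoneCech K) (hscont : Continuous hs)
    (hsext : ∀ x : K, hs (stoneCechUnit x) = stoneCechUnit (s • x))
    (p : StoneCech K) (hp : p ∉ Set.range (stoneCechUnit : K → StoneCech K))
    (f g : lp (fun _ : Γ => ℝ) ∞) (hg : ∀ t : Γ, g t = f (s * t)) :
    φt (hs p) f = φt p g := by
  set G : StoneCech K → ℝ := fun q => φt q g - φt (hs q) f
  have hG : Continuous G :=
    ((WeakBilin.eval_continuous _ g).comp hφt).sub
      ((WeakBilin.eval_continuous _ f).comp (hφt.comp hscont))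
  have hG_unit (x : K) :
      G (stoneCechUnit x) = ∑' t, μ x (s⁻¹ * t) * f t - ∑' t, μ (s • x) t * f t := by
    simp only [G, hsext, hφext, hφ, tsum_mul_eq_tsum_translate_mul (μ x) f g s hg]
  have hG_tendsto : Tendsto (G ∘ stoneCechUnit) cofinite (𝓝 0) := by
    refine squeeze_zero_norm (fun x => ?_) (by simpa using (happrox s).mul_const ‖f‖)
    rw [Function.comp_apply, hG_unit, Real.norm_eq_abs]
    exact abs_tsum_mul_sub_tsum_mul_le
      ((Equiv.mulLeft s⁻¹).summable_iff.2 (hprob x).2.1) (hprob (s • x)).2.1 f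
  exact (sub_eq_zero.1 (denseRange_stoneCechUnit.eq_of_tendsto_cofinite hG hG_tendsto hp)).symm

/-- Let `Γ` act on a countably infinite discrete set `K` and let
`μ : K → Prob(Γ)` satisfy `‖s·μ_x − μ_{s·x}‖₁ → 0` along the cofinite filter, for
every `s ∈ Γ`. Regard each `μ_x` as a state `φ_x` on `ℓ∞(Γ)`, `φ_x(f) = Σ_t μ_x(t)f(t)`.
If `φ̃ : βK → ℓ∞(Γ)*` is the continuous extension of `x ↦ φ_x` to the Stone–Čech
compactification of `K` (with the weak-* topology on the target) and, for `s ∈ Γ`,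
`h_s : βK → βK` is the continuous extension of `x ↦ s·x`, then for every point `p` of
the Stone–Čech remainder `βK \ K`, one has `φ̃(s·p) = s·φ̃(p)`, i.e.
`φ̃(h_s p)(f) = φ̃(p)(s⁻¹·f)` for every `f ∈ ℓ∞(Γ)`, where `(s⁻¹·f)(t) = f(s t)`. -/
theorem stmt11 {Γ K : Type*} [Group Γ] [Countable Γ]
    [TopologicalSpace K] [DiscreteTopology K] [Countable K] [Infinite K]
    [MulAction Γ K]
    (μ : K → Γ → ℝ)
    (hprob : ∀ x, (∀ t, 0 ≤ μ x t) ∧ Summable (μ x) ∧ (∑' t, μ x t) = 1)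
    (happrox : ∀ s : Γ,
      Tendsto (fun x : K => ∑' t, |μ x (s⁻¹ * t) - μ (s • x) t|) cofinite (nhds 0))
    (φ : K → WeakDual ℝ (lp (fun _ : Γ => ℝ) ∞))
    (hφ : ∀ (x : K) (f : lp (fun _ : Γ => ℝ) ∞), φ x f = ∑' t, μ x t * f t)
    (φt : StoneCech K → WeakDual ℝ (lp (fun _ : Γ => ℝ) ∞))
    (hφt : Continuous φt) (hφext : ∀ x : K, φt (stoneCechUnit x) = φ x)
    (s : Γ) (hs : StoneCech K → StoneCech K) (hscont : Continuous hs)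
    (hsext : ∀ x : K, hs (stoneCechUnit x) = stoneCechUnit (s • x))
    (p : StoneCech K) (hp : p ∉ Set.range (stoneCechUnit : K → StoneCech K))
    (f g : lp (fun _ : Γ => ℝ) ∞) (hg : ∀ t : Γ, g t = f (s * t)) :
    φt (hs p) f = φt p g :=
  stmt11_general μ hprob happrox φ hφ φt hφt hφext s hs hscont hsext p hp f g hg
end

section
/- Let H be a Hilbert space, let (u_n) be a sequence of unitary operators on H converging to 0 in the weak operator topology, and let x be a compact operator on H. Then u_n x u_n* converges to 0 in the weak operator topology. -/
open Filter Topology ContinuousLinearMap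

/-! The vectors `(u n)* ζ` have norm `‖ζ‖` and are weakly null, since
`⟪w, (u n)* ζ⟫ = ⟪u n w, ζ⟫`. A compact operator maps bounded weakly null sequences to
norm-null ones, so `x ((u n)* ζ) → 0` in norm, and `u n` is an isometry. -/

theorem IsCompactOperator.tendsto_norm_apply_of_weakly_tendsto_zero
    {𝕜 E F : Type*} [RCLike 𝕜] [NormedAddCommGroup E] [NormedSpace 𝕜 E]
    [NormedAddCommGroup F] [NormedSpace 𝕜 F] {T : E →L[𝕜] F} (hT : IsCompactOperator T)
    {v : ℕ → E} {C : ℝ} (hbdd : ∀ n, ‖v n‖ ≤ C)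
    (hweak : ∀ f : StrongDual 𝕜 E, Tendsto (fun n => f (v n)) atTop (𝓝 0)) :
    Tendsto (fun n => ‖T (v n)‖) atTop (𝓝 0) := by
  refine tendsto_of_subseq_tendsto fun ns hns => ?_
  have hK : IsCompact (closure (T '' Metric.closedBall 0 C)) :=
    hT.isCompact_closure_image_of_bounded Metric.isBounded_closedBall
  have hmem : ∀ k, T (v (ns k)) ∈ closure (T '' Metric.closedBall 0 C) := fun k =>
    subset_closure ⟨v (ns k), mem_closedBall_zero_iff.mpr (hbdd _), rfl⟩
  obtain ⟨a, -, ms, hms, hlim⟩ := hK.tendsto_subseq hmem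
  have ha : a = 0 := by
    refine SeparatingDual.eq_zero_of_forall_dual_eq_zero (R := 𝕜) fun f => ?_
    have hweak' := (hweak (f ∘L T)).comp (hns.comp hms.tendsto_atTop)
    exact tendsto_nhds_unique ((f.continuous.tendsto a).comp hlim) hweak'
  refine ⟨ms, ?_⟩
  simpa [ha] using hlim.norm

theorem InnerProductSpace.tendsto_dual_of_tendsto_inner
    {𝕜 E : Type*} [RCLike 𝕜] [NormedAddCommGroup E] [InnerProductSpace 𝕜 E] [CompleteSpace E]
    {v : ℕ → E} (hweak : ∀ w, Tendsto (fun n => (inner 𝕜 w (v n) : 𝕜)) atTop (𝓝 0))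
    (f : StrongDual 𝕜 E) : Tendsto (fun n => f (v n)) atTop (𝓝 0) := by
  simpa only [toDual_symm_apply] using hweak ((toDual 𝕜 E).symm f)

/-- If `(u n)` is a sequence of unitary operators on a Hilbert space `H`
converging to `0` in the weak operator topology and `x` is a compact operator on `H`,
then `u n ∘ x ∘ (u n)*` converges to `0` in the weak operator topology. -/
theorem stmt12 {H : Type*} [NormedAddCommGroup H] [InnerProductSpace ℂ H] [CompleteSpace H]
    (u : ℕ → H →L[ℂ] H)
    (hu : ∀ n, (u n).comp (adjoint (u n)) = ContinuousLinearMap.id ℂ H ∧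
               (adjoint (u n)).comp (u n) = ContinuousLinearMap.id ℂ H)
    (huw : ∀ ζ ζ' : H, Tendsto (fun n => (inner ℂ ((u n) ζ) ζ' : ℂ)) atTop (nhds 0))
    (x : H →L[ℂ] H) (hx : IsCompactOperator x) :
    ∀ ζ ζ' : H,
      Tendsto (fun n => (inner ℂ (((u n).comp (x.comp (adjoint (u n)))) ζ) ζ' : ℂ))
        atTop (nhds 0) := by
  intro ζ ζ'
  have hu_norm : ∀ n w, ‖u n w‖ = ‖w‖ := fun n =>
    (u n).norm_map_iff_adjoint_comp_self.mpr (hu n).2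
  have hu_adj_norm : ∀ n w, ‖adjoint (u n) w‖ = ‖w‖ := fun n =>
    (adjoint (u n)).norm_map_iff_adjoint_comp_self.mpr (by rw [adjoint_adjoint, (hu n).1]; rfl)
  have hweak : ∀ w, Tendsto (fun n => (inner ℂ w (adjoint (u n) ζ) : ℂ)) atTop (𝓝 0) := by
    simpa only [adjoint_inner_right] using fun w => huw w ζ
  have hx_norm : Tendsto (fun n => ‖x (adjoint (u n) ζ)‖) atTop (𝓝 0) :=
    hx.tendsto_norm_apply_of_weakly_tendsto_zero (fun n => (hu_adj_norm n ζ).le)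
      (InnerProductSpace.tendsto_dual_of_tendsto_inner hweak)
  refine squeeze_zero_norm (fun n => ?_) (by simpa using hx_norm.mul_const ‖ζ'‖)
  calc ‖(inner ℂ (u n (x (adjoint (u n) ζ))) ζ' : ℂ)‖
      ≤ ‖u n (x (adjoint (u n) ζ))‖ * ‖ζ'‖ := norm_inner_le_norm _ _
    _ = ‖x (adjoint (u n) ζ)‖ * ‖ζ'‖ := by rw [hu_norm]
end
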